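/- arXiv:2104.12570 — 2 statements merged into one kernel-verified Lean document; each statement's English description precedes it below -/
import Mathlib

section
/- Let x be a real obs × vars matrix whose columns are all nonzero, let y ∈ ℝ^obs, and let (a^k) be any sequence in ℝ^vars produced by iterating the SolveBak update with column choices j_k and step sizes da_k = ⟨x_{j_k}, y - x a^k⟩ / ⟨x_{j_k}, x_{j_k}⟩. Then the sequence of squared residual norms s_k = ‖y - x a^k‖² is nonincreasing and bounded below by 0, and hence converges to a limit L with 0 ≤ L ≤ ‖y - x a^0‖². -/
open scoped RealInnerProductSpace BigOperators

/-- The `j`-th column of the matrix `x`, as a vector in Euclidean space. -/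
def col {obs vars : ℕ} (x : Matrix (Fin obs) (Fin vars) ℝ) (j : Fin vars) :
    EuclideanSpace ℝ (Fin obs) :=
  WithLp.toLp 2 (fun i => x i j)

/-- The residual `y - x a` of the linear system `x a = y`, as a vector in Euclidean space. -/
def resid {obs vars : ℕ} (x : Matrix (Fin obs) (Fin vars) ℝ)
    (y : Fin obs → ℝ) (a : Fin vars → ℝ) : EuclideanSpace ℝ (Fin obs) :=
  WithLp.toLp 2 (fun i => y i - x.mulVec a i)

/-! A SolveBak step subtracts from the residual `r` its orthogonal projection onto the chosen
column `c`, so the new residual is the projection of `r` onto `cᗮ` and its norm cannot grow;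
monotone convergence then gives the limit. -/

open Filter Topology

-- For `c = 0` the step is trivial: `0 / 0 = 0`.
theorem norm_sub_inner_div_inner_smul_le {E : Type*} [NormedAddCommGroup E]
    [InnerProductSpace ℝ E] (c r : E) :
    ‖r - (⟪c, r⟫ / ⟪c, c⟫) • c‖ ≤ ‖r‖ := by
  have hproj : r - (⟪c, r⟫ / ⟪c, c⟫) • c = (ℝ ∙ c)ᗮ.starProjection r := by
    rw [Submodule.starProjection_orthogonal_val, Submodule.starProjection_singleton,
      real_inner_self_eq_norm_sq]
    rfl
  exact hproj ▸ (ℝ ∙ c)ᗮ.norm_starProjection_apply_le r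

open Matrix in
theorem Matrix.mulVec_update_add {m n R : Type*} [Fintype n] [DecidableEq n] [CommSemiring R]
    (x : Matrix m n R) (a : n → R) (j : n) (d : R) :
    x *ᵥ Function.update a j (a j + d) = x *ᵥ a + d • x.col j := by
  have hupdate : Function.update a j (a j + d) = a + Pi.single j d := by
    ext i
    rcases eq_or_ne i j with rfl | h <;> simp [*]
  rw [hupdate, mulVec_add, mulVec_single, op_smul_eq_smul]

theorem resid_update {obs vars : ℕ} (x : Matrix (Fin obs) (Fin vars) ℝ)
    (y : Fin obs → ℝ) (a : Fin vars → ℝ) (j : Fin vars) (d : ℝ) :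
    resid x y (Function.update a j (a j + d)) = resid x y a - d • col x j := by
  ext i
  simp only [resid, col, Matrix.mulVec_update_add, PiLp.sub_apply, PiLp.smul_apply, Pi.add_apply,
    Pi.smul_apply, Matrix.col_apply, smul_eq_mul]
  ring

theorem Antitone.exists_tendsto_of_forall_le {u : ℕ → ℝ} {b : ℝ} (hu : Antitone u)
    (hb : ∀ n, b ≤ u n) : ∃ L, Tendsto u atTop (𝓝 L) ∧ b ≤ L ∧ L ≤ u 0 := by
  have hlim := tendsto_atTop_ciInf hu ⟨b, Set.forall_mem_range.2 hb⟩
  exact ⟨_, hlim, ge_of_tendsto' hlim hb, hu.le_of_tendsto hlim 0⟩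

theorem solvebak_residuals_converge_general (obs vars : ℕ)
    (x : Matrix (Fin obs) (Fin vars) ℝ)
    (y : Fin obs → ℝ)
    (a : ℕ → Fin vars → ℝ) (jseq : ℕ → Fin vars) (da : ℕ → ℝ)
    (hda : ∀ k, da k =
      ⟪col x (jseq k), resid x y (a k)⟫ / ⟪col x (jseq k), col x (jseq k)⟫)
    (hstep : ∀ k, a (k + 1) = Function.update (a k) (jseq k) (a k (jseq k) + da k)) :
    Antitone (fun k => ‖resid x y (a k)‖ ^ 2) ∧
      (∀ k, 0 ≤ ‖resid x y (a k)‖ ^ 2) ∧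
      ∃ L : ℝ, Filter.Tendsto (fun k => ‖resid x y (a k)‖ ^ 2) Filter.atTop (nhds L) ∧
        0 ≤ L ∧ L ≤ ‖resid x y (a 0)‖ ^ 2 := by
  have hanti : Antitone (fun k => ‖resid x y (a k)‖ ^ 2) := by
    refine antitone_nat_of_succ_le fun k => ?_
    rw [hstep k, resid_update, hda k]
    gcongr
    exact norm_sub_inner_div_inner_smul_le _ _
  have hnonneg : ∀ k, 0 ≤ ‖resid x y (a k)‖ ^ 2 := fun k => sq_nonneg _
  exact ⟨hanti, hnonneg, hanti.exists_tendsto_of_forall_le hnonneg⟩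

theorem solvebak_residuals_converge (obs vars : ℕ) (hobs : 0 < obs) (hvars : 0 < vars)
    (x : Matrix (Fin obs) (Fin vars) ℝ) (hcols : ∀ j, col x j ≠ 0)
    (y : Fin obs → ℝ)
    (a : ℕ → Fin vars → ℝ) (jseq : ℕ → Fin vars) (da : ℕ → ℝ)
    (hda : ∀ k, da k =
      ⟪col x (jseq k), resid x y (a k)⟫ / ⟪col x (jseq k), col x (jseq k)⟫)
    (hstep : ∀ k, a (k + 1) = Function.update (a k) (jseq k) (a k (jseq k) + da k)) :
    Antitone (fun k => ‖resid x y (a k)‖ ^ 2) ∧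
      (∀ k, 0 ≤ ‖resid x y (a k)‖ ^ 2) ∧
      ∃ L : ℝ, Filter.Tendsto (fun k => ‖resid x y (a k)‖ ^ 2) Filter.atTop (nhds L) ∧
        0 ≤ L ∧ L ≤ ‖resid x y (a 0)‖ ^ 2 :=
  solvebak_residuals_converge_general obs vars x y a jseq da hda hstep
end

section
/- Let x be a real obs × vars matrix whose columns are all nonzero, let y ∈ ℝ^obs, and let (a^k) be a sequence produced by iterating the SolveBak update with column choices j_k. If ⟨x_{j_k}, y - x a^k⟩ ≠ 0 at step k, then ‖y - x a^{k+1}‖² < ‖y - x a^k‖²; in particular, strict decrease of the squared residual occurs at step k if and only if the current residual is not orthogonal to the chosen column x_{j_k}. -/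
/-!
Raising the `j`-th coefficient by `c` moves the residual by `-c • x_j`. The SolveBak step size
makes the new residual orthogonal to `x_j`, so by Pythagoras the step removes the squared length
`⟨x_j, r⟩² / ‖x_j‖²` of the projection of the residual `r` onto `x_j`; this is positive precisely
when `⟨x_j, r⟩ ≠ 0`.
-/

open scoped RealInnerProductSpace BigOperators

section ProjectionStep

variable {E : Type*} [NormedAddCommGroup E] [InnerProductSpace ℝ E]

theorem norm_sub_inner_div_inner_self_smul_sq (v r : E) :
    ‖r - (⟪v, r⟫ / ⟪v, v⟫) • v‖ ^ 2 = ‖r‖ ^ 2 - ⟪v, r⟫ ^ 2 / ‖v‖ ^ 2 := by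
  rcases eq_or_ne v 0 with rfl | hv
  · simp
  have hv' : ‖v‖ ≠ 0 := norm_ne_zero_iff.mpr hv
  rw [norm_sub_sq_real, norm_smul, real_inner_smul_right, real_inner_self_eq_norm_sq,
    real_inner_comm r v, mul_pow, Real.norm_eq_abs, sq_abs]
  field_simp
  ring

theorem norm_sub_inner_div_inner_self_smul_sq_lt_iff {v : E} (hv : v ≠ 0) (r : E) :
    ‖r - (⟪v, r⟫ / ⟪v, v⟫) • v‖ ^ 2 < ‖r‖ ^ 2 ↔ ⟪v, r⟫ ≠ 0 := by
  have hv' : 0 < ‖v‖ ^ 2 := by positivity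
  rw [norm_sub_inner_div_inner_self_smul_sq, sub_lt_self_iff, div_pos_iff_of_pos_right hv',
    sq_pos_iff]

end ProjectionStep

theorem resid_update_add {obs vars : ℕ} (x : Matrix (Fin obs) (Fin vars) ℝ)
    (y : Fin obs → ℝ) (a : Fin vars → ℝ) (j : Fin vars) (c : ℝ) :
    resid x y (Function.update a j (a j + c)) = resid x y a - c • col x j := by
  have hupdate : Function.update a j (a j + c) = a + Pi.single j c := by
    ext l
    rcases eq_or_ne l j with rfl | hl
    · simp
    · simp [hl]
  ext i
  simp only [resid, col, hupdate, Matrix.mulVec_add, Matrix.mulVec_single, PiLp.sub_apply,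
    PiLp.smul_apply, Pi.add_apply, Pi.smul_apply, Matrix.col_apply, op_smul_eq_smul, smul_eq_mul]
  ring

theorem solvebak_strict_decrease_iff_general (obs vars : ℕ)
    (x : Matrix (Fin obs) (Fin vars) ℝ) (hcols : ∀ j, col x j ≠ 0)
    (y : Fin obs → ℝ)
    (a : ℕ → Fin vars → ℝ) (jseq : ℕ → Fin vars) (da : ℕ → ℝ)
    (hda : ∀ k, da k =
      ⟪col x (jseq k), resid x y (a k)⟫ / ⟪col x (jseq k), col x (jseq k)⟫)
    (hstep : ∀ k, a (k + 1) = Function.update (a k) (jseq k) (a k (jseq k) + da k)) :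
    ∀ k : ℕ,
      (⟪col x (jseq k), resid x y (a k)⟫ ≠ 0 →
        ‖resid x y (a (k + 1))‖ ^ 2 < ‖resid x y (a k)‖ ^ 2) ∧
      (‖resid x y (a (k + 1))‖ ^ 2 < ‖resid x y (a k)‖ ^ 2 ↔
        ⟪col x (jseq k), resid x y (a k)⟫ ≠ 0) := by
  intro k
  have hdecrease := norm_sub_inner_div_inner_self_smul_sq_lt_iff (hcols (jseq k)) (resid x y (a k))
  rw [← hda, ← resid_update_add, ← hstep] at hdecrease
  exact ⟨hdecrease.mpr, hdecrease⟩

theorem solvebak_strict_decrease_iff (obs vars : ℕ) (hobs : 0 < obs) (hvars : 0 < vars)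
    (x : Matrix (Fin obs) (Fin vars) ℝ) (hcols : ∀ j, col x j ≠ 0)
    (y : Fin obs → ℝ)
    (a : ℕ → Fin vars → ℝ) (jseq : ℕ → Fin vars) (da : ℕ → ℝ)
    (hda : ∀ k, da k =
      ⟪col x (jseq k), resid x y (a k)⟫ / ⟪col x (jseq k), col x (jseq k)⟫)
    (hstep : ∀ k, a (k + 1) = Function.update (a k) (jseq k) (a k (jseq k) + da k)) :
    ∀ k : ℕ,
      (⟪col x (jseq k), resid x y (a k)⟫ ≠ 0 →
        ‖resid x y (a (k + 1))‖ ^ 2 < ‖resid x y (a k)‖ ^ 2) ∧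
      (‖resid x y (a (k + 1))‖ ^ 2 < ‖resid x y (a k)‖ ^ 2 ↔
        ⟪col x (jseq k), resid x y (a k)⟫ ≠ 0) :=
  solvebak_strict_decrease_iff_general obs vars x hcols y a jseq da hda hstep
end
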